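/- The function g(r) = −cos r (r cos r + sin r)/(r + cos r sin r) satisfies g(r) < 0.1 for all r ∈ [0, π + 1]. -/

import Mathlib

/-!
Over the denominator `10 (r + cos r sin r) = 10 r + 5 sin (2r)`, which is positive for `r > 0`
because `|sin x| < |x|`, the difference `1/10 - g(r)` has numerator
`10 r cos² r + 11 cos r sin r + r`, so it suffices to show that this is positive.
This is clear where `cos r, sin r ≥ 0`, i.e. up to `π/2`. From `r = 7/4` on it follows by completing
the square in `cos r`, since `121 < 40 r²` there. On the short interval `(π/2, 7/4]` the cosine is
tiny, `|cos r| = sin (r - π/2) < r - π/2 < 0.18`, and the quadratic `10 r x² - 11 x + r` is still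
positive there. Since `g` is even, the bound in fact holds on all of `ℝ`.
-/

open Real

/-- `g(r) = −cos r (r cos r + sin r)/(r + cos r sin r)`, extended continuously
by `g(0) = −1` at `r = 0`. -/
noncomputable def gOT (r : ℝ) : ℝ :=
  if r = 0 then -1
  else -(Real.cos r * (r * Real.cos r + Real.sin r)) / (r + Real.cos r * Real.sin r)

theorem gOT_neg (r : ℝ) : gOT (-r) = gOT r := by
  by_cases hr : r = 0
  · simp [hr]
  · rw [gOT, gOT, if_neg (neg_ne_zero.2 hr), if_neg hr, cos_neg, sin_neg, ← neg_div_neg_eq]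
    ring_nf

theorem add_cos_mul_sin_pos {r : ℝ} (hr : 0 < r) : 0 < r + cos r * sin r := by
  have h := abs_sin_lt_abs (x := 2 * r) (by positivity)
  rw [abs_of_pos (by positivity : 0 < 2 * r), sin_two_mul] at h
  linarith [neg_abs_le (2 * sin r * cos r)]

section Numerator

variable {r : ℝ}

theorem numerator_pos_of_le_pi_div_two (h0 : 0 < r) (h : r ≤ π / 2) :
    0 < 10 * r * cos r ^ 2 + 11 * (cos r * sin r) + r := by
  have hs : 0 ≤ sin r := sin_nonneg_of_nonneg_of_le_pi h0.le (by linarith [pi_pos])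
  have hc : 0 ≤ cos r := cos_nonneg_of_mem_Icc ⟨by linarith [pi_pos], h⟩
  positivity

theorem numerator_pos_of_pi_div_two_lt (h : π / 2 < r) (h' : r ≤ 7 / 4) :
    0 < 10 * r * cos r ^ 2 + 11 * (cos r * sin r) + r := by
  have hπ := pi_gt_d2
  have hc : cos r ≤ 0 := cos_nonpos_of_pi_div_two_le_of_le h.le (by linarith)
  have hs : 0 ≤ sin r := sin_nonneg_of_nonneg_of_le_pi (by linarith) (by linarith)
  have hcos_small : -cos r < 0.18 := by
    have := sin_lt (sub_pos.2 h)
    rw [sin_sub_pi_div_two] at this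
    linarith
  nlinarith [sin_le_one r, mul_nonneg (neg_nonneg.2 hc) (sub_nonneg.2 (sin_le_one r)),
    mul_nonneg (sub_nonneg.2 (by linarith : 1.57 ≤ r)) (sq_nonneg (cos r)),
    mul_nonneg (by linarith : (0 : ℝ) ≤ 0.18 + cos r) (by linarith : (0 : ℝ) ≤ 1 + 1.57 * cos r)]

theorem numerator_pos_of_seven_fourths_le (h : 7 / 4 ≤ r) :
    0 < 10 * r * cos r ^ 2 + 11 * (cos r * sin r) + r := by
  have : 0 < 40 * r * (10 * r * cos r ^ 2 + 11 * (cos r * sin r) + r) := by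
    have hsquare : 40 * r * (10 * r * cos r ^ 2 + 11 * (cos r * sin r) + r)
        = (20 * r * cos r + 11 * sin r) ^ 2 - 121 * sin r ^ 2 + 40 * r ^ 2 := by ring
    rw [hsquare]
    nlinarith [sq_nonneg (20 * r * cos r + 11 * sin r), sin_sq_le_one r]
  exact pos_of_mul_pos_right this (by linarith)

theorem numerator_pos (h0 : 0 < r) :
    0 < 10 * r * cos r ^ 2 + 11 * (cos r * sin r) + r := by
  rcases le_or_gt r (π / 2) with h₁ | h₁
  · exact numerator_pos_of_le_pi_div_two h0 h₁
  rcases le_or_gt r (7 / 4) with h₂ | h₂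
  · exact numerator_pos_of_pi_div_two_lt h₁ h₂
  · exact numerator_pos_of_seven_fourths_le h₂.le

end Numerator

theorem gOT_lt (r : ℝ) : gOT r < 0.1 := by
  wlog hr : 0 ≤ r generalizing r
  · simpa [gOT_neg] using this (-r) (by linarith)
  rcases hr.eq_or_lt with rfl | hr
  · norm_num [gOT]
  rw [gOT, if_neg hr.ne', div_lt_iff₀ (add_cos_mul_sin_pos hr)]
  linarith [numerator_pos hr]

/-- The scaling function `g` is everywhere smaller than `0.1` on `[0, π + 1]`. -/
theorem stmt5 : ∀ r ∈ Set.Icc (0 : ℝ) (π + 1), gOT r < 0.1 :=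
  fun r _ => gOT_lt r
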